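/- Let q ≥ 2 be an integer and let f be a probability density function on (0,1) with ‖f‖_∞ = sup_{(0,1)} |f| < ∞ which is continuous on (0,1) except at finitely many points. Then sup_{x ∈ (0,1)} |f_n(x) − 1| → 0 as n → ∞, i.e. the densities f_n of T^n(X) converge uniformly to 1. -/

import Mathlib

open MeasureTheory Set Filter

/-- `f_n(x) = q^{−n} Σ_{j=0}^{q^n−1} f(q^{−n}(j+x))`, the density of `T^n(X)`
when `X` has density `f`. -/
noncomputable def gIter (q : ℕ) (f : ℝ → ℝ) (n : ℕ) (x : ℝ) : ℝ :=
  (q : ℝ) ^ (-(n : ℤ)) * ∑ j ∈ Finset.range (q ^ n), f (((j : ℝ) + x) / (q : ℝ) ^ n)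

/-! With `N = q^n`, `f_n(x)` is the Riemann sum of `f` over the `N` cells `[j/N, (j+1)/N]` with
tags `(j+x)/N`, so `f_n(x) - 1 = ∑ⱼ ∫_{cell j} (f((j+x)/N) - f(t)) dt`. On the cells that stay
`δ` away from the exceptional points and from `0, 1`, the function `f` is uniformly continuous,
so these cells contribute at most `ε`; the other cells number `O(Nδ + 1)` per exceptional point
and each contributes at most `2‖f‖_∞/N`. None of these bounds depends on `x`. -/

open Finset

theorem card_filter_abs_natCast_sub_le (K : ℕ) (c : ℝ) {r : ℝ} (hr : 0 ≤ r) :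
    (((range K).filter fun j : ℕ => |(j : ℝ) - c| ≤ r).card : ℝ) ≤ 2 * r + 1 := by
  set A := (range K).filter fun j : ℕ => |(j : ℝ) - c| ≤ r
  have hA : A.map Nat.castEmbedding ⊆ Finset.Icc ⌈c - r⌉ ⌊c + r⌋ := by
    intro z hz
    obtain ⟨j, hj, rfl⟩ := mem_map.mp hz
    have hj := abs_le.mp (mem_filter.mp hj).2
    simp only [Nat.castEmbedding_apply, Finset.mem_Icc, Int.ceil_le, Int.le_floor,
      Int.cast_natCast]
    constructor <;> linarith
  have hcard := Finset.card_le_card hA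
  rw [card_map, Int.card_Icc] at hcard
  have hfloor := Int.floor_le (c + r)
  have hceil := Int.le_ceil (c - r)
  rcases le_total (⌊c + r⌋ + 1 - ⌈c - r⌉) 0 with h | h
  · rw [Int.toNat_of_nonpos h] at hcard
    have : A.card = 0 := by omega
    rw [this]; push_cast; linarith
  · have : (A.card : ℤ) ≤ ⌊c + r⌋ + 1 - ⌈c - r⌉ := by omega
    have : (A.card : ℝ) ≤ ((⌊c + r⌋ + 1 - ⌈c - r⌉ : ℤ) : ℝ) := by exact_mod_cast this
    push_cast at this
    linarith

theorem integrableOn_of_bounded_of_continuousAt_off_countable {f : ℝ → ℝ} {s : Set ℝ}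
    (hs : MeasurableSet s) (hs' : volume s ≠ ⊤) {M : ℝ} (hM : ∀ x ∈ s, |f x| ≤ M)
    {S : Set ℝ} (hSc : S.Countable) (hS : ∀ x ∈ s, x ∉ S → ContinuousAt f x) :
    IntegrableOn f s := by
  have hcont : ContinuousOn f (s \ S) := fun x hx => (hS x hx.1 hx.2).continuousWithinAt
  have hae : AEStronglyMeasurable f (volume.restrict s) := by
    rw [← Measure.restrict_congr_set (sdiff_null_ae_eq_self (hSc.measure_zero volume))]
    exact hcont.aestronglyMeasurable (hs.diff hSc.measurableSet)
  exact ⟨hae, .restrict_of_bounded (C := M) hs'.lt_top ((ae_restrict_iff' hs).mpr (.of_forall hM))⟩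

noncomputable def shiftedRiemannSum (f : ℝ → ℝ) (N : ℕ) (x : ℝ) : ℝ :=
  (N : ℝ)⁻¹ * ∑ j ∈ range N, f ((j + x) / N)

theorem add_one_div_le_one_of_lt {N j : ℕ} (hj : j < N) : ((j : ℝ) + 1) / N ≤ 1 := by
  rw [div_le_one (by exact_mod_cast Nat.zero_lt_of_lt hj)]
  exact_mod_cast hj

theorem intervalIntegrable_grid {f : ℝ → ℝ} (hf : IntegrableOn f (Ioo 0 1)) {N j : ℕ}
    (hj : j < N) : IntervalIntegrable f volume (j / N : ℝ) ((j + 1) / N) := by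
  rw [← integrableOn_Ioc_iff_integrableOn_Ioo] at hf
  refine (intervalIntegrable_iff_integrableOn_Ioc_of_le (by gcongr; simp)).mpr (hf.mono_set ?_)
  exact Ioc_subset_Ioc (by positivity) (add_one_div_le_one_of_lt hj)

theorem integral_Ioo_zero_one_eq_sum {f : ℝ → ℝ} (hf : IntegrableOn f (Ioo 0 1)) {N : ℕ}
    (hN : N ≠ 0) :
    ∫ t in Ioo 0 1, f t = ∑ j ∈ range N, ∫ t in (j / N : ℝ)..((j + 1) / N), f t := by
  have hpiece : ∀ j < N, IntervalIntegrable f volume ((j : ℕ) / N : ℝ) (((j + 1 : ℕ) : ℝ) / N) := by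
    intro j hj
    exact_mod_cast intervalIntegrable_grid hf hj
  rw [← integral_Ioc_eq_integral_Ioo, ← intervalIntegral.integral_of_le zero_le_one]
  have := intervalIntegral.sum_integral_adjacent_intervals (a := fun k : ℕ => (k : ℝ) / N) hpiece
  have hN0 : (N : ℝ) ≠ 0 := by exact_mod_cast hN
  simp only [Nat.cast_zero, zero_div, Nat.cast_add, Nat.cast_one, div_self hN0] at this
  exact this.symm

theorem abs_shiftedRiemannSum_sub_integral_le {f : ℝ → ℝ} (hf : IntegrableOn f (Ioo 0 1))
    {N : ℕ} (hN : N ≠ 0) {x : ℝ} (C : ℕ → ℝ)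
    (hC : ∀ j < N, ∀ t ∈ Ioo (j / N : ℝ) ((j + 1) / N), |f ((j + x) / N) - f t| ≤ C j) :
    |shiftedRiemannSum f N x - ∫ t in Ioo 0 1, f t| ≤ (N : ℝ)⁻¹ * ∑ j ∈ range N, C j := by
  have hlen : ∀ j : ℕ, ((j + 1) / N - j / N : ℝ) = (N : ℝ)⁻¹ := fun j => by ring
  have hsplit : shiftedRiemannSum f N x - ∫ t in Ioo 0 1, f t =
      ∑ j ∈ range N, ∫ t in (j / N : ℝ)..((j + 1) / N), (f ((j + x) / N) - f t) := by
    rw [integral_Ioo_zero_one_eq_sum hf hN, shiftedRiemannSum, mul_sum, ← sum_sub_distrib]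
    refine sum_congr rfl fun j hj => ?_
    rw [intervalIntegral.integral_sub intervalIntegrable_const
      (intervalIntegrable_grid hf (mem_range.mp hj)), intervalIntegral.integral_const, hlen,
      smul_eq_mul]
  rw [hsplit, mul_sum]
  refine (abs_sum_le_sum_abs _ _).trans (sum_le_sum fun j hj => ?_)
  have hbound := intervalIntegral.norm_integral_le_of_norm_le_const_ae
    (a := (j / N : ℝ)) (b := (j + 1) / N) (C := C j) (f := fun t => f ((j + x) / N) - f t) <| by
      filter_upwards [Ioo_ae_eq_Ioc (a := (j / N : ℝ)) (b := (j + 1) / N)] with t ht hmem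
      rw [uIoc_of_le (by gcongr; simp)] at hmem
      exact hC j (mem_range.mp hj) t (ht.symm.mp hmem)
  rw [hlen, abs_of_pos (by positivity), Real.norm_eq_abs, mul_comm] at hbound
  exact hbound

def awayFrom (S : Finset ℝ) (δ : ℝ) : Set ℝ := Icc 0 1 \ ⋃ s ∈ S, Metric.ball s δ

theorem isCompact_awayFrom (S : Finset ℝ) (δ : ℝ) : IsCompact (awayFrom S δ) :=
  isCompact_Icc.diff (isOpen_biUnion fun _ _ => Metric.isOpen_ball)

open Classical in
theorem card_filter_not_subset_awayFrom_le (S : Finset ℝ) {δ : ℝ} (hδ : 0 ≤ δ) (N : ℕ) :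
    (((range N).filter fun j : ℕ => ¬ Icc (j / N : ℝ) ((j + 1) / N) ⊆ awayFrom S δ).card : ℝ)
      ≤ S.card * (2 * N * δ + 3) := by
  set near : ℝ → Finset ℕ := fun s => (range N).filter fun j => |(j : ℝ) - N * s| ≤ N * δ + 1
  have hsub : ((range N).filter fun j : ℕ => ¬ Icc (j / N : ℝ) ((j + 1) / N) ⊆ awayFrom S δ)
      ⊆ S.biUnion near := by
    intro j hj
    obtain ⟨hjN, hbad⟩ := mem_filter.mp hj
    obtain ⟨y, hy, hyK⟩ := not_subset.mp hbad
    have hy01 : y ∈ Icc (0 : ℝ) 1 :=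
      ⟨(by positivity : (0 : ℝ) ≤ j / N).trans hy.1,
        hy.2.trans (add_one_div_le_one_of_lt (mem_range.mp hjN))⟩
    obtain ⟨s, hs, hys⟩ : ∃ s ∈ S, dist y s < δ := by
      by_contra! h
      exact hyK ⟨hy01, by simpa [Metric.mem_ball] using h⟩
    have hN : (0 : ℝ) < N := by exact_mod_cast Nat.zero_lt_of_lt (mem_range.mp hjN)
    have hjy : |(j : ℝ) - N * y| ≤ 1 := by
      have h1 := (le_div_iff₀ hN).mp hy.2
      have h2 := (div_le_iff₀ hN).mp hy.1
      rw [abs_le]; constructor <;> linarith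
    have hys' : |y - s| ≤ δ := (Real.dist_eq y s ▸ hys).le
    refine mem_biUnion.mpr ⟨s, hs, mem_filter.mpr ⟨hjN, ?_⟩⟩
    calc |(j : ℝ) - N * s| = |((j : ℝ) - N * y) + N * (y - s)| := by ring_nf
      _ ≤ |(j : ℝ) - N * y| + N * |y - s| := by
          exact (abs_add_le _ _).trans_eq (by rw [abs_mul, abs_of_pos hN])
      _ ≤ N * δ + 1 := by nlinarith
  calc (((range N).filter _).card : ℝ) ≤ ∑ s ∈ S, ((near s).card : ℝ) := by
        exact_mod_cast (Finset.card_le_card hsub).trans card_biUnion_le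
    _ ≤ ∑ s ∈ S, (2 * (N * δ + 1) + 1) :=
        sum_le_sum fun s _ => card_filter_abs_natCast_sub_le N _ (by positivity)
    _ = S.card * (2 * N * δ + 3) := by rw [sum_const, nsmul_eq_mul]; ring

open Classical in
theorem abs_shiftedRiemannSum_sub_integral_le_of_oscillation {f : ℝ → ℝ}
    (hf : IntegrableOn f (Ioo 0 1)) {M : ℝ} (hM : ∀ x ∈ Ioo (0 : ℝ) 1, |f x| ≤ M) (S : Finset ℝ)
    {δ ε : ℝ} (hδ : 0 ≤ δ) (hε : 0 ≤ ε) {N : ℕ} (hN : N ≠ 0)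
    (hosc : ∀ y ∈ awayFrom S δ, ∀ z ∈ awayFrom S δ, |y - z| ≤ (N : ℝ)⁻¹ → |f y - f z| ≤ ε)
    {x : ℝ} (hx : x ∈ Ioo (0 : ℝ) 1) :
    |shiftedRiemannSum f N x - ∫ t in Ioo 0 1, f t|
      ≤ ε + 2 * M * S.card * (2 * δ + 3 / N) := by
  have hM0 : 0 ≤ M := (abs_nonneg _).trans (hM (1 / 2) (by norm_num))
  let good : ℕ → Prop := fun j => Icc (j / N : ℝ) ((j + 1) / N) ⊆ awayFrom S δ
  have hC : ∀ j < N, ∀ t ∈ Ioo (j / N : ℝ) ((j + 1) / N),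
      |f ((j + x) / N) - f t| ≤ if good j then ε else 2 * M := by
    intro j hj t ht
    have htag : (j + x) / N ∈ Ioo (j / N : ℝ) ((j + 1) / N) :=
      ⟨by gcongr; linarith [hx.1], by gcongr; exact hx.2⟩
    split_ifs with hgood
    · refine hosc _ (hgood (Ioo_subset_Icc_self htag)) _ (hgood (Ioo_subset_Icc_self ht)) ?_
      rw [abs_le]
      have : ((j + 1) / N - j / N : ℝ) = (N : ℝ)⁻¹ := by ring
      constructor <;> linarith [htag.1, htag.2, ht.1, ht.2]
    · have hIoo : Ioo (j / N : ℝ) ((j + 1) / N) ⊆ Ioo 0 1 :=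
        Ioo_subset_Ioo (by positivity) (add_one_div_le_one_of_lt hj)
      calc |f ((j + x) / N) - f t| ≤ |f ((j + x) / N)| + |f t| := abs_sub _ _
        _ ≤ M + M := add_le_add (hM _ (hIoo htag)) (hM _ (hIoo ht))
        _ = 2 * M := by ring
  calc |shiftedRiemannSum f N x - ∫ t in Ioo 0 1, f t|
      ≤ (N : ℝ)⁻¹ * ∑ j ∈ range N, if good j then ε else 2 * M :=
        abs_shiftedRiemannSum_sub_integral_le hf hN _ hC
    _ ≤ (N : ℝ)⁻¹ * (N * ε + ((range N).filter fun j => ¬ good j).card * (2 * M)) := by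
        rw [sum_ite, sum_const, sum_const, nsmul_eq_mul, nsmul_eq_mul]
        gcongr
        exact_mod_cast (card_filter_le _ _).trans_eq (card_range N)
    _ ≤ (N : ℝ)⁻¹ * (N * ε + S.card * (2 * N * δ + 3) * (2 * M)) := by
        gcongr
        exact card_filter_not_subset_awayFrom_le S hδ N
    _ = ε + 2 * M * S.card * (2 * δ + 3 / N) := by field_simp

theorem tendstoUniformlyOn_shiftedRiemannSum {f : ℝ → ℝ} {M : ℝ}
    (hM : ∀ x ∈ Ioo (0 : ℝ) 1, |f x| ≤ M) {S : Finset ℝ}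
    (hS : ∀ x ∈ Ioo (0 : ℝ) 1, x ∉ S → ContinuousAt f x) :
    TendstoUniformlyOn (shiftedRiemannSum f) (fun _ => ∫ t in Ioo 0 1, f t) atTop (Ioo 0 1) := by
  have hf : IntegrableOn f (Ioo 0 1) :=
    integrableOn_of_bounded_of_continuousAt_off_countable measurableSet_Ioo (by simp) hM
      S.countable_toSet hS
  set S' : Finset ℝ := insert 0 (insert 1 S)
  set m : ℝ := (S'.card : ℝ)
  rw [Metric.tendstoUniformlyOn_iff]
  intro ε hε
  obtain ⟨δ, hδ, hδε⟩ := exists_pos_mul_lt (by positivity : 0 < ε / 3) (4 * M * m)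
  have hcont : ContinuousOn f (awayFrom S' δ) := by
    intro y hy
    have hfar : ∀ s ∈ S', y ≠ s := fun s hs hys =>
      hy.2 (mem_biUnion hs (Metric.mem_ball.mpr (by simpa [hys] using hδ)))
    have hy01 : y ∈ Ioo (0 : ℝ) 1 :=
      ⟨hy.1.1.lt_of_ne (hfar 0 (by simp [S'])).symm, hy.1.2.lt_of_ne (hfar 1 (by simp [S']))⟩
    exact (hS y hy01 fun hyS => hfar y (by simp [S', hyS]) rfl).continuousWithinAt
  obtain ⟨η, hη, hosc⟩ := Metric.uniformContinuousOn_iff_le.mp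
    ((isCompact_awayFrom S' δ).uniformContinuousOn_of_continuous hcont) (ε / 3) (by positivity)
  filter_upwards [eventually_ne_atTop 0,
    tendsto_inv_atTop_nhds_zero_nat.eventually (eventually_le_nhds hη),
    (tendsto_const_div_atTop_nhds_zero_nat (6 * M * m)).eventually
      (eventually_lt_nhds (by positivity : 0 < ε / 3))] with N hN hNη hNε x hx
  have hest := abs_shiftedRiemannSum_sub_integral_le_of_oscillation hf hM S' hδ.le
    (by positivity) hN (fun y hy z hz hyz => hosc y hy z hz
      ((Real.dist_eq y z).trans_le (hyz.trans hNη))) hx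
  have hexpand : 2 * M * m * (2 * δ + 3 / N) = 4 * M * m * δ + 6 * M * m / N := by ring
  rw [dist_comm, Real.dist_eq]
  linarith

theorem gIter_eq_shiftedRiemannSum (q : ℕ) (f : ℝ → ℝ) (n : ℕ) :
    gIter q f n = shiftedRiemannSum f (q ^ n) := by
  ext x
  simp [gIter, shiftedRiemannSum, zpow_neg]

theorem stmt15_general
    (q : ℕ) (hq : 2 ≤ q)
    (f : ℝ → ℝ)
    (hf_pdf : ∫ t in Set.Ioo (0:ℝ) 1, f t = 1)
    -- `‖f‖_∞ < ∞`
    (hbdd : BddAbove ((fun x => |f x|) '' Set.Ioo (0:ℝ) 1))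
    -- `f` is continuous on `(0,1)` except at finitely many points
    (hcont : ∃ S : Finset ℝ, ∀ x ∈ Set.Ioo (0:ℝ) 1, x ∉ S → ContinuousAt f x) :
    TendstoUniformlyOn (fun n x => gIter q f n x) (fun _ => 1) atTop
      (Set.Ioo (0:ℝ) 1) := by
  obtain ⟨M, hM⟩ := hbdd
  obtain ⟨S, hS⟩ := hcont
  have hlim := tendstoUniformlyOn_shiftedRiemannSum (fun x hx => hM ⟨x, hx, rfl⟩) hS
  rw [hf_pdf, Metric.tendstoUniformlyOn_iff] at hlim
  rw [Metric.tendstoUniformlyOn_iff]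
  intro ε hε
  filter_upwards [(tendsto_pow_atTop_atTop_of_one_lt hq).eventually (hlim ε hε)] with n hn
  simpa only [gIter_eq_shiftedRiemannSum] using hn

theorem stmt15
    (q : ℕ) (hq : 2 ≤ q)
    (f : ℝ → ℝ) (hf_meas : Measurable f) (hf_nonneg : ∀ x, 0 ≤ f x)
    (hf_supp : ∀ x, x ∉ Set.Ioo (0:ℝ) 1 → f x = 0)
    (hf_pdf : ∫ t in Set.Ioo (0:ℝ) 1, f t = 1)
    -- `‖f‖_∞ < ∞`
    (hbdd : BddAbove ((fun x => |f x|) '' Set.Ioo (0:ℝ) 1))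
    -- `f` is continuous on `(0,1)` except at finitely many points
    (hcont : ∃ S : Finset ℝ, ∀ x ∈ Set.Ioo (0:ℝ) 1, x ∉ S → ContinuousAt f x) :
    TendstoUniformlyOn (fun n x => gIter q f n x) (fun _ => 1) atTop
      (Set.Ioo (0:ℝ) 1) :=
  stmt15_general q hq f hf_pdf hbdd hcont
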